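/- Let A ∈ ℝ^{n×n} have rank n with SVD A = S_A Σ_A T_A^T, let H ∈ ℝ^{n×r} with r ≤ n, and set Ĥ = T_A^T H. Then for every l ≤ n and every j, σ_j(AH) ≥ σ_l(A) · σ_j(Ĥ_{l,r}), where Ĥ_{l,r} is the l×r leading submatrix of Ĥ. -/

import Mathlib

open Matrix

/-- The `j`-th largest singular value (1-indexed) of a real matrix, defined as the square
root of the `j`-th largest eigenvalue of `AᴴA`; it is `0` for `j` out of range. -/
noncomputable def singularValue {m n : ℕ} (A : Matrix (Fin m) (Fin n) ℝ) (j : ℕ) : ℝ :=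
  if h : 1 ≤ j ∧ j ≤ n then
    Real.sqrt ((by simpa using Matrix.isHermitian_conjTranspose_mul_self A : (Aᵀ * A).IsHermitian).eigenvalues
      (Tuple.sort (by simpa using Matrix.isHermitian_conjTranspose_mul_self A : (Aᵀ * A).IsHermitian).eigenvalues ⟨n - j, by omega⟩))
  else 0

/-!
Courant–Fischer: if an operator has an orthonormal eigenbasis, its `k`-th smallest eigenvalue is
at least `t` as soon as some subspace of dimension `m - k` carries Rayleigh quotients `≥ t`, and
some such subspace realizes the eigenvalue itself. Hence `c² ‖C v‖² ≤ ‖G v‖²` for all `v` gives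
`c σ_j(C) ≤ σ_j(G)`. For `G = A H = S Σ (Tᵀ H)` with `S` orthogonal,
`‖A H v‖² = ‖Σ Tᵀ H v‖² ≥ σ_l(A)² ‖Ĥ_{l,r} v‖²`, because the first `l` diagonal entries of `Σ`
are at least `σ_l(A)`.
-/

open scoped RealInnerProductSpace

section CourantFischer

variable {E : Type*} [NormedAddCommGroup E] [InnerProductSpace ℝ E]

section Basis

variable {ι : Type*} [Fintype ι] {T : E →ₗ[ℝ] E} {b : OrthonormalBasis ι ℝ E} {μ : ι → ℝ}

theorem inner_apply_self_eq_sum_of_apply_eq_smul (hb : ∀ i, T (b i) = μ i • b i) (x : E) :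
    ⟪x, T x⟫ = ∑ i, μ i * ⟪b i, x⟫ ^ 2 := by
  nth_rw 2 [← b.sum_repr' x]
  simp only [map_sum, map_smul, hb, inner_sum, inner_smul_right, real_inner_comm x]
  exact Finset.sum_congr rfl fun i _ => by ring

theorem OrthonormalBasis.inner_eq_zero_of_mem_span_image {s : Set ι} {i : ι} (hi : i ∉ s) {x : E}
    (hx : x ∈ Submodule.span ℝ (b '' s)) : ⟪b i, x⟫ = 0 := by
  have hspan : Submodule.span ℝ (b '' s) ≤ (ℝ ∙ b i)ᗮ := by
    refine Submodule.span_le.mpr ?_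
    rintro _ ⟨j, hj, rfl⟩
    exact Submodule.mem_orthogonal_singleton_iff_inner_right.mpr
      (b.orthonormal.2 (ne_of_mem_of_not_mem hj hi).symm)
  exact Submodule.mem_orthogonal_singleton_iff_inner_right.mp (hspan hx)

theorem OrthonormalBasis.finrank_span_image (s : Set ι) [Fintype s] :
    Module.finrank ℝ (Submodule.span ℝ (b '' s)) = Fintype.card s := by
  rw [Set.image_eq_range]
  exact finrank_span_eq_card (b.orthonormal.linearIndependent.comp _ Subtype.coe_injective)

theorem inner_apply_self_le_of_mem_span (hb : ∀ i, T (b i) = μ i • b i) {s : Set ι} {t : ℝ}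
    (h : ∀ i ∈ s, μ i ≤ t) {x : E} (hx : x ∈ Submodule.span ℝ (b '' s)) :
    ⟪x, T x⟫ ≤ t * ‖x‖ ^ 2 := by
  rw [inner_apply_self_eq_sum_of_apply_eq_smul hb, ← b.sum_sq_inner_right, Finset.mul_sum]
  refine Finset.sum_le_sum fun i _ => ?_
  by_cases hi : i ∈ s
  · exact mul_le_mul_of_nonneg_right (h i hi) (sq_nonneg _)
  · simp [b.inner_eq_zero_of_mem_span_image hi hx]

theorem le_inner_apply_self_of_mem_span (hb : ∀ i, T (b i) = μ i • b i) {s : Set ι} {t : ℝ}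
    (h : ∀ i ∈ s, t ≤ μ i) {x : E} (hx : x ∈ Submodule.span ℝ (b '' s)) :
    t * ‖x‖ ^ 2 ≤ ⟪x, T x⟫ := by
  have hb' : ∀ i, (-T) (b i) = (-μ) i • b i := fun i => by simp [hb]
  have := inner_apply_self_le_of_mem_span hb' (t := -t) (fun i hi => neg_le_neg (h i hi)) hx
  simp only [LinearMap.neg_apply, inner_neg_right] at this
  linarith

end Basis

section Sorted

variable {m : ℕ} {T T' : E →ₗ[ℝ] E} {b b' : OrthonormalBasis (Fin m) ℝ E}
  {μ μ' : Fin m → ℝ}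

theorem le_apply_sort_of_forall_mem (hb : ∀ i, T (b i) = μ i • b i) (k : Fin m) {t : ℝ}
    (V : Submodule ℝ E) (hV : m - k ≤ Module.finrank ℝ V)
    (h : ∀ x ∈ V, t * ‖x‖ ^ 2 ≤ ⟪x, T x⟫) : t ≤ μ (Tuple.sort μ k) := by
  have : FiniteDimensional ℝ E := .of_basis b.toBasis
  set W := Submodule.span ℝ (b '' (Tuple.sort μ '' Set.Iic k))
  have hW : Module.finrank ℝ W = k + 1 := by
    rw [b.finrank_span_image, Set.card_image_of_injective _ (Tuple.sort μ).injective]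
    simp
  have hVW : ¬ Disjoint V W := fun hdisj => by
    have := Submodule.finrank_add_finrank_le_of_disjoint hdisj
    rw [hW, Module.finrank_eq_card_basis b.toBasis, Fintype.card_fin] at this
    omega
  obtain ⟨x, hxV, hxW, hx0⟩ : ∃ x ∈ V, x ∈ W ∧ x ≠ 0 := by
    simpa [Submodule.disjoint_def] using hVW
  have hle : ⟪x, T x⟫ ≤ μ (Tuple.sort μ k) * ‖x‖ ^ 2 := by
    refine inner_apply_self_le_of_mem_span hb ?_ hxW
    rintro _ ⟨k', hk', rfl⟩
    exact Tuple.monotone_sort μ hk'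
  have hx : 0 < ‖x‖ ^ 2 := by positivity
  nlinarith [h x hxV]

theorem exists_finrank_forall_mem_apply_sort_le (hb : ∀ i, T (b i) = μ i • b i) (k : Fin m) :
    ∃ V : Submodule ℝ E, m - k ≤ Module.finrank ℝ V ∧
      ∀ x ∈ V, μ (Tuple.sort μ k) * ‖x‖ ^ 2 ≤ ⟪x, T x⟫ := by
  refine ⟨Submodule.span ℝ (b '' (Tuple.sort μ '' Set.Ici k)), ?_, fun x hx => ?_⟩
  · rw [b.finrank_span_image, Set.card_image_of_injective _ (Tuple.sort μ).injective]
    simp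
  · refine le_inner_apply_self_of_mem_span hb ?_ hx
    rintro _ ⟨k', hk', rfl⟩
    exact Tuple.monotone_sort μ hk'

theorem mul_apply_sort_le_of_forall_inner_le (hb : ∀ i, T (b i) = μ i • b i)
    (hb' : ∀ i, T' (b' i) = μ' i • b' i) {c : ℝ} (hc : 0 ≤ c)
    (h : ∀ x, c * ⟪x, T x⟫ ≤ ⟪x, T' x⟫) (k : Fin m) :
    c * μ (Tuple.sort μ k) ≤ μ' (Tuple.sort μ' k) := by
  obtain ⟨V, hV, hVμ⟩ := exists_finrank_forall_mem_apply_sort_le hb k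
  refine le_apply_sort_of_forall_mem hb' k V hV fun x hx => ?_
  calc c * μ (Tuple.sort μ k) * ‖x‖ ^ 2 = c * (μ (Tuple.sort μ k) * ‖x‖ ^ 2) := mul_assoc ..
    _ ≤ c * ⟪x, T x⟫ := mul_le_mul_of_nonneg_left (hVμ x hx) hc
    _ ≤ ⟪x, T' x⟫ := h x

end Sorted

end CourantFischer

namespace Matrix

variable {m n : ℕ}

theorem isHermitian_transpose_mul_self (X : Matrix (Fin m) (Fin n) ℝ) : (Xᵀ * X).IsHermitian := by
  simpa using isHermitian_conjTranspose_mul_self X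

theorem IsHermitian.toLpLin_eigenvectorBasis {M : Matrix (Fin n) (Fin n) ℝ} (hM : M.IsHermitian)
    (i : Fin n) :
    toLpLin 2 2 M (hM.eigenvectorBasis i) = hM.eigenvalues i • hM.eigenvectorBasis i :=
  congrArg (WithLp.toLp 2) (hM.mulVec_eigenvectorBasis i)

theorem inner_toLpLin_transpose_mul_self (X : Matrix (Fin m) (Fin n) ℝ)
    (x : EuclideanSpace ℝ (Fin n)) :
    ⟪x, toLpLin 2 2 (Xᵀ * X) x⟫ = (X *ᵥ x) ⬝ᵥ (X *ᵥ x) := by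
  rw [toLpLin_apply, EuclideanSpace.inner_eq_star_dotProduct, star_trivial, ← mulVec_mulVec,
    dotProduct_comm, dotProduct_mulVec, vecMul_transpose]

theorem dotProduct_mulVec_self_of_transpose_mul_self_eq_one {S : Matrix (Fin n) (Fin n) ℝ}
    (hS : Sᵀ * S = 1) (w : Fin n → ℝ) : (S *ᵥ w) ⬝ᵥ (S *ᵥ w) = w ⬝ᵥ w := by
  rw [dotProduct_mulVec, ← mulVec_transpose, mulVec_mulVec, hS, one_mulVec]

theorem sq_mul_dotProduct_castLE_le_diagonal {l : ℕ} (hl : l ≤ n) {d : Fin n → ℝ} {σ : ℝ}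
    (hσ : 0 ≤ σ) (hσd : ∀ i : Fin n, i.1 < l → σ ≤ d i) (y : Fin n → ℝ) :
    σ ^ 2 * ((y ∘ Fin.castLE hl) ⬝ᵥ (y ∘ Fin.castLE hl)) ≤
      (diagonal d *ᵥ y) ⬝ᵥ (diagonal d *ᵥ y) := by
  have hterm : ∀ i : Fin l, σ ^ 2 * (y (Fin.castLE hl i) * y (Fin.castLE hl i)) ≤
      d (Fin.castLE hl i) * y (Fin.castLE hl i) * (d (Fin.castLE hl i) * y (Fin.castLE hl i)) := by
    intro i
    have := pow_le_pow_left₀ hσ (hσd (Fin.castLE hl i) i.2) 2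
    nlinarith [mul_self_nonneg (y (Fin.castLE hl i))]
  calc σ ^ 2 * ((y ∘ Fin.castLE hl) ⬝ᵥ (y ∘ Fin.castLE hl))
      ≤ ∑ i : Fin l, d (Fin.castLE hl i) * y (Fin.castLE hl i) *
          (d (Fin.castLE hl i) * y (Fin.castLE hl i)) := by
        rw [dotProduct, Finset.mul_sum]
        exact Finset.sum_le_sum fun i _ => hterm i
    _ = ∑ i ∈ Finset.univ.map (Fin.castLEEmb hl), d i * y i * (d i * y i) := by
        rw [Finset.sum_map]
        rfl
    _ ≤ (diagonal d *ᵥ y) ⬝ᵥ (diagonal d *ᵥ y) := by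
        simp only [dotProduct, mulVec_diagonal]
        exact Finset.sum_le_univ_sum_of_nonneg fun i => mul_self_nonneg _

theorem sq_mul_dotProduct_submatrix_le {r l : ℕ} (hl : l ≤ n) {S : Matrix (Fin n) (Fin n) ℝ}
    (hS : Sᵀ * S = 1) {d : Fin n → ℝ} {σ : ℝ} (hσ : 0 ≤ σ)
    (hσd : ∀ i : Fin n, i.1 < l → σ ≤ d i) (B : Matrix (Fin n) (Fin r) ℝ) (v : Fin r → ℝ) :
    σ ^ 2 * ((B.submatrix (Fin.castLE hl) id *ᵥ v) ⬝ᵥ (B.submatrix (Fin.castLE hl) id *ᵥ v)) ≤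
      ((S * diagonal d * B) *ᵥ v) ⬝ᵥ ((S * diagonal d * B) *ᵥ v) := by
  rw [← mulVec_mulVec, ← mulVec_mulVec, dotProduct_mulVec_self_of_transpose_mul_self_eq_one hS]
  exact sq_mul_dotProduct_castLE_le_diagonal hl hσ hσd (B *ᵥ v)

end Matrix

section SingularValue

variable {m n : ℕ}

theorem singularValue_nonneg (X : Matrix (Fin m) (Fin n) ℝ) (j : ℕ) : 0 ≤ singularValue X j := by
  unfold singularValue
  split_ifs <;> positivity

theorem singularValue_eq_sqrt (X : Matrix (Fin m) (Fin n) ℝ) {j : ℕ} (hj : 1 ≤ j) (hjn : j ≤ n) :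
    singularValue X j = √((isHermitian_transpose_mul_self X).eigenvalues
      (Tuple.sort (isHermitian_transpose_mul_self X).eigenvalues ⟨n - j, by omega⟩)) :=
  dif_pos ⟨hj, hjn⟩

theorem singularValue_antitoneOn (X : Matrix (Fin m) (Fin n) ℝ) :
    AntitoneOn (singularValue X) (Set.Ici 1) := by
  intro a ha b hb hab
  by_cases hbn : b ≤ n
  · rw [singularValue_eq_sqrt X hb hbn, singularValue_eq_sqrt X ha (hab.trans hbn)]
    exact Real.sqrt_le_sqrt (Tuple.monotone_sort (isHermitian_transpose_mul_self X).eigenvalues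
      (Fin.mk_le_mk.mpr (by omega : n - b ≤ n - a)))
  · rw [singularValue, dif_neg (by omega)]
    exact singularValue_nonneg X a

theorem mul_singularValue_le_of_forall_dotProduct_le {p : ℕ} (X : Matrix (Fin m) (Fin n) ℝ)
    (Y : Matrix (Fin p) (Fin n) ℝ) {c : ℝ} (hc : 0 ≤ c)
    (h : ∀ v, c ^ 2 * ((X *ᵥ v) ⬝ᵥ (X *ᵥ v)) ≤ (Y *ᵥ v) ⬝ᵥ (Y *ᵥ v)) (j : ℕ) :
    c * singularValue X j ≤ singularValue Y j := by
  by_cases hj : 1 ≤ j ∧ j ≤ n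
  · rw [singularValue_eq_sqrt X hj.1 hj.2, singularValue_eq_sqrt Y hj.1 hj.2, ← Real.sqrt_sq hc,
      ← Real.sqrt_mul (sq_nonneg c)]
    refine Real.sqrt_le_sqrt (mul_apply_sort_le_of_forall_inner_le
      (isHermitian_transpose_mul_self X).toLpLin_eigenvectorBasis
      (isHermitian_transpose_mul_self Y).toLpLin_eigenvectorBasis (sq_nonneg c) (fun x => ?_) _)
    simpa only [inner_toLpLin_transpose_mul_self] using h x
  · simp [singularValue, dif_neg hj]

end SingularValue

theorem singularValue_mul_lower_bound_general
    {n r : ℕ} (A : Matrix (Fin n) (Fin n) ℝ)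
    (S T : Matrix (Fin n) (Fin n) ℝ) (hS : Sᵀ * S = 1)
    (hSVD : A = S * Matrix.diagonal (fun i : Fin n => singularValue A (i.1 + 1)) * Tᵀ)
    (H : Matrix (Fin n) (Fin r) ℝ) (l : ℕ) (hl : l ≤ n) (j : ℕ) :
    singularValue A l * singularValue ((Tᵀ * H).submatrix (Fin.castLE hl) id) j ≤
      singularValue (A * H) j := by
  have hσd : ∀ i : Fin n, i.1 < l → singularValue A l ≤ singularValue A (i.1 + 1) :=
    fun i hi => singularValue_antitoneOn A (Set.mem_Ici.mpr le_add_self)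
      (Set.mem_Ici.mpr (by omega)) hi
  refine mul_singularValue_le_of_forall_dotProduct_le _ _ (singularValue_nonneg A l)
    (fun v => ?_) j
  have hAH : A * H = S * diagonal (fun i : Fin n => singularValue A (i.1 + 1)) * (Tᵀ * H) := by
    conv_lhs => rw [hSVD]
    simp only [Matrix.mul_assoc]
  rw [hAH]
  exact sq_mul_dotProduct_submatrix_le hl hS (singularValue_nonneg A l) hσd (Tᵀ * H) v

/-- Let `A ∈ ℝ^{n×n}` be nonsingular with SVD `A = S Σ Tᵀ`, `H ∈ ℝ^{n×r}` with `r ≤ n`,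
and `Ĥ = Tᵀ H`. Then for every `l ≤ n` and every `j`,
`σ_j(A H) ≥ σ_l(A) · σ_j(Ĥ_{l,r})`, where `Ĥ_{l,r}` is the leading l×r submatrix of `Ĥ`. -/
theorem singularValue_mul_lower_bound
    {n r : ℕ} (hr : r ≤ n) (A : Matrix (Fin n) (Fin n) ℝ) (hA : IsUnit A.det)
    (S T : Matrix (Fin n) (Fin n) ℝ) (hS : Sᵀ * S = 1) (hT : Tᵀ * T = 1)
    (hSVD : A = S * Matrix.diagonal (fun i : Fin n => singularValue A (i.1 + 1)) * Tᵀ)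
    (H : Matrix (Fin n) (Fin r) ℝ) (l : ℕ) (hl : l ≤ n) (j : ℕ) :
    singularValue A l * singularValue ((Tᵀ * H).submatrix (Fin.castLE hl) id) j ≤
      singularValue (A * H) j :=
  singularValue_mul_lower_bound_general A S T hS hSVD H l hl j
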